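/- arXiv:1508.06982 — 6 statements merged into one kernel-verified Lean document; each statement's English description precedes it below -/
import Mathlib

section
/- Let G be a (possibly infinite) simple graph, k a positive integer, and S a nonempty subset of V(G). Then G is (k,S)-connected if and only if for every vertex v ∈ V(G) − S there exist k paths in G, each with one endpoint v and the other endpoint in S, such that any two of these paths share no vertex other than v. -/
/-!
Menger's theorem for graphs with finitely many edges goes by induction on the number of edges: if
deleting an edge `xy` leaves an `A`–`B` separator `Y` with `|Y| < k`, then `Y + x` and `Y + y` are
`A`–`B` separators of `G` of size `k`; by induction there are `k` disjoint walks in `G - xy` from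
`A` onto `Y + x` and from `Y + y` onto `B`, and these are glued along `Y` and `xy`. Applied to the
neighbourhood of `v` and `S` it gives the fan lemma for finitely many edges, and a compactness
argument on a largest fan removes the finiteness. Conversely, fewer than `k` vertices other than `v`
miss one of the `k` paths of a fan.
-/

open SimpleGraph

/-- `G` is `k`-connected relative to `S` (`(k,S)`-connected): for every set `T` of fewer
than `k` vertices, every connected component of `G - T` contains a vertex of `S`. -/
def KSConnected {V : Type*} (G : SimpleGraph V) (k : ℕ) (S : Set V) : Prop :=
  ∀ T : Set V, T.encard < (k : ℕ∞) →
    ∀ v : V, ∀ hv : v ∉ T, ∃ s : V, ∃ hs : s ∉ T, s ∈ S ∧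
      (G.induce (Tᶜ : Set V)).Reachable ⟨v, hv⟩ ⟨s, hs⟩

theorem Set.nonempty_equiv_fin_of_encard_eq {α : Type*} {s : Set α} {k : ℕ} (h : s.encard = k) :
    Nonempty (s ≃ Fin k) := by
  have hs : s.Finite := Set.finite_of_encard_eq_coe h
  have := hs.to_subtype
  have hk : Nat.card s = k := by
    rw [Nat.card_coe_set_eq, ← Nat.cast_inj (R := ℕ∞), hs.cast_ncard_eq, h]
  exact ⟨(Finite.equivFin s).trans (finCongr hk)⟩

namespace SimpleGraph

variable {V : Type*} {G H : SimpleGraph V} {A B S X Y Z : Set V} {u v w x y a b : V}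

def ReachableAvoiding (G : SimpleGraph V) (X : Set V) (u v : V) : Prop :=
  ∃ p : G.Walk u v, ∀ z ∈ p.support, z ∉ X

def Separates (G : SimpleGraph V) (A B X : Set V) : Prop :=
  ∀ a ∈ A, ∀ b ∈ B, ¬ G.ReachableAvoiding X a b

def HasLinkage (G : SimpleGraph V) (A B : Set V) (ι : Type*) : Prop :=
  ∃ (a b : ι → V) (p : ∀ i, G.Walk (a i) (b i)), (∀ i, a i ∈ A) ∧ (∀ i, b i ∈ B) ∧
    Pairwise fun i j => (p i).support.Disjoint (p j).support

def HasLinkageOnto (G : SimpleGraph V) (A X : Set V) : Prop :=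
  ∃ (a : X → V) (p : ∀ t : X, G.Walk (a t) t), (∀ t, a t ∈ A) ∧
    (Pairwise fun t t' => (p t).support.Disjoint (p t').support) ∧
    ∀ t, ∀ z ∈ (p t).support.dropLast, z ∉ X

def IsFan {ι : Type*} {e : ι → V} (v : V) (S : Set V) (p : ∀ i, G.Walk v (e i)) : Prop :=
  (∀ i, e i ∈ S) ∧ Pairwise fun i j => ∀ z ∈ (p i).support, z ∈ (p j).support → z = v

def HasFan (G : SimpleGraph V) (v : V) (S : Set V) (k : ℕ) : Prop :=
  ∃ (e : Fin k → V) (p : ∀ i, G.Walk v (e i)), IsFan v S p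

namespace ReachableAvoiding

theorem refl (hu : u ∉ X) : G.ReachableAvoiding X u u :=
  ⟨.nil, by simpa using hu⟩

theorem symm (h : G.ReachableAvoiding X u v) : G.ReachableAvoiding X v u := by
  obtain ⟨p, hp⟩ := h
  exact ⟨p.reverse, by simpa using hp⟩

theorem trans (h₁ : G.ReachableAvoiding X u v) (h₂ : G.ReachableAvoiding X v w) :
    G.ReachableAvoiding X u w := by
  obtain ⟨p, hp⟩ := h₁
  obtain ⟨q, hq⟩ := h₂
  exact ⟨p.append q, fun z hz => (Walk.mem_support_append_iff p q).1 hz |>.elim (hp z) (hq z)⟩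

theorem concat (h : G.ReachableAvoiding X u v) (hvw : G.Adj v w) (hw : w ∉ X) :
    G.ReachableAvoiding X u w := by
  obtain ⟨p, hp⟩ := h
  refine ⟨p.concat hvw, fun z hz => ?_⟩
  rw [Walk.support_concat, List.mem_append, List.mem_singleton] at hz
  rcases hz with hz | rfl
  exacts [hp z hz, hw]

theorem mono (hGH : G ≤ H) (hYX : Y ⊆ X) (h : G.ReachableAvoiding X u v) :
    H.ReachableAvoiding Y u v := by
  obtain ⟨p, hp⟩ := h
  exact ⟨p.mapLe hGH, fun z hz hzY => hp z (by simpa using hz) (hYX hzY)⟩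

/-- A walk avoiding `x` does not use the edge `xy`. -/
theorem deleteEdges (hx : x ∈ X) (h : G.ReachableAvoiding X u v) :
    (G.deleteEdges {s(x, y)}).ReachableAvoiding X u v := by
  obtain ⟨p, hp⟩ := h
  refine ⟨p.toDeleteEdges _ fun e he hex => ?_, by simpa using hp⟩
  rw [Set.mem_singleton_iff] at hex
  exact hp x (p.fst_mem_support_of_mem_edges (hex ▸ he)) hx

end ReachableAvoiding

theorem Separates.symm (h : G.Separates A B X) : G.Separates B A X :=
  fun b hb a ha hba => h a ha b hb hba.symm

theorem Separates.insert_of_deleteEdges (h : (G.deleteEdges {s(x, y)}).Separates A B Y) :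
    G.Separates A B (insert x Y) :=
  fun a ha b hb hab => h a ha b hb <|
    (hab.deleteEdges (Set.mem_insert x Y)).mono le_rfl (Set.subset_insert x Y)

theorem Walk.exists_walk_dropLast_notMem :
    ∀ {u w : V} (p : G.Walk u w), (∃ z ∈ p.support, z ∈ X) →
      ∃ t ∈ X, ∃ q : G.Walk u t, q.support ⊆ p.support ∧ ∀ z ∈ q.support.dropLast, z ∉ X
  | u, _, .nil, h => by
    obtain ⟨z, hz, hzX⟩ := h
    rw [Walk.support_nil, List.mem_singleton] at hz
    exact ⟨u, hz ▸ hzX, .nil, fun _ h => h, by simp⟩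
  | u, _, .cons hadj p, h => by
    by_cases hu : u ∈ X
    · exact ⟨u, hu, .nil, by simp, by simp⟩
    obtain ⟨t, ht, q, hqp, hq⟩ := p.exists_walk_dropLast_notMem <| by
      obtain ⟨z, hz, hzX⟩ := h
      exact ⟨z, ((Walk.mem_support_iff _).1 hz).resolve_left (by rintro rfl; exact hu hzX), hzX⟩
    refine ⟨t, ht, .cons hadj q, List.cons_subset_cons _ hqp, fun z hz => ?_⟩
    rw [Walk.support_cons, List.dropLast_cons_of_ne_nil q.support_ne_nil] at hz
    rcases List.mem_cons.1 hz with rfl | hz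
    exacts [hu, hq z hz]

theorem Walk.eq_of_mem_of_dropLast_notMem {p : G.Walk u v} (hp : ∀ z ∈ p.support.dropLast, z ∉ X)
    (hz : w ∈ p.support) (hwX : w ∈ X) : w = v := by
  rw [← List.dropLast_append_getLast p.support_ne_nil, List.mem_append] at hz
  rcases hz with hz | hz
  · exact absurd hwX (hp w hz)
  · simpa using hz

theorem Walk.reachableAvoiding_of_dropLast_notMem :
    ∀ {u v : V} (p : G.Walk u v), (∀ z ∈ p.support.dropLast, z ∉ X) →
      ∀ w ∈ p.support, w ∉ X → G.ReachableAvoiding X u w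
  | _, _, .nil, _, w, hw, hwX => by
    rw [Walk.support_nil, List.mem_singleton] at hw
    exact hw ▸ .refl hwX
  | u, _, .cons hadj p, hp, w, hw, hwX => by
    rw [Walk.support_cons, List.dropLast_cons_of_ne_nil p.support_ne_nil] at hp
    have hu : u ∉ X := hp u List.mem_cons_self
    rcases List.mem_cons.1 (Walk.support_cons _ _ ▸ hw) with rfl | hw
    · exact .refl hu
    · obtain ⟨q, hq⟩ := p.reachableAvoiding_of_dropLast_notMem
        (fun z hz => hp z (List.mem_cons_of_mem _ hz)) w hw hwX
      refine ⟨.cons hadj q, fun z hz => ?_⟩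
      rcases List.mem_cons.1 (Walk.support_cons _ _ ▸ hz) with rfl | hz
      exacts [hu, hq z hz]

namespace HasLinkage

variable {ι κ : Type*}

theorem congr (e : ι ≃ κ) (h : G.HasLinkage A B ι) : G.HasLinkage A B κ := by
  obtain ⟨a, b, p, ha, hb, hp⟩ := h
  exact ⟨a ∘ e.symm, b ∘ e.symm, fun i => p (e.symm i), fun i => ha _, fun i => hb _,
    fun i j hij => hp (e.symm.injective.ne hij)⟩

theorem mono (hGH : G ≤ H) (h : G.HasLinkage A B ι) : H.HasLinkage A B ι := by
  obtain ⟨a, b, p, ha, hb, hp⟩ := h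
  exact ⟨a, b, fun i => (p i).mapLe hGH, ha, hb, fun i j hij => by
    simpa [Walk.support_mapLe_eq_support] using hp hij⟩

theorem symm (h : G.HasLinkage A B ι) : G.HasLinkage B A ι := by
  obtain ⟨a, b, p, ha, hb, hp⟩ := h
  exact ⟨b, a, fun i => (p i).reverse, hb, ha, fun i j hij => by
    simpa [List.disjoint_reverse_left, List.disjoint_reverse_right] using hp hij⟩

/-- Cutting each walk at its first vertex in `X`: when `|X| = k`, the `k` cut walks end in
distinct vertices of `X` and hence in all of them. -/
theorem hasLinkageOnto {k : ℕ} (h : G.HasLinkage A X (Fin k)) (hX : X.encard = k) :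
    G.HasLinkageOnto A X := by
  obtain ⟨a, b, p, ha, hb, hp⟩ := h
  choose t htX q hqp hq using fun i => (p i).exists_walk_dropLast_notMem
    ⟨b i, (p i).end_mem_support, hb i⟩
  have ht : Function.Injective t := fun i j hij => by
    by_contra hne
    exact hp hne (hqp i (q i).end_mem_support) (hqp j (by rw [hij]; exact (q j).end_mem_support))
  have hrange : Set.range t = X := by
    refine (Set.finite_range t).eq_of_subset_of_encard_le ?_ ?_
    · rintro _ ⟨i, rfl⟩
      exact htX i
    · simpa [hX] using ht.encard_range
  let e : Fin k ≃ X := Equiv.ofBijective (fun i => ⟨t i, htX i⟩)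
    ⟨fun i j hij => ht (congrArg Subtype.val hij), fun s => by
      obtain ⟨i, hi⟩ : (s : V) ∈ Set.range t := by rw [hrange]; exact s.2
      exact ⟨i, Subtype.ext hi⟩⟩
  have het : ∀ s, t (e.symm s) = s := fun s => congrArg Subtype.val (e.apply_symm_apply s)
  refine ⟨fun s => a (e.symm s), fun s => (q (e.symm s)).copy rfl (het s), fun s => ha _,
    fun s s' hss' => ?_, fun s => by simpa using hq (e.symm s)⟩
  simp only [Walk.support_copy]
  exact fun z hz hz' => hp (e.symm.injective.ne hss') (hqp _ hz) (hqp _ hz')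

end HasLinkage

theorem hasLinkage_of_le_encard_inter {k : ℕ} (h : k ≤ (A ∩ B).encard) :
    G.HasLinkage A B (Fin k) := by
  obtain ⟨T, hTAB, hT⟩ := Set.exists_subset_encard_eq h
  obtain ⟨e⟩ := Set.nonempty_equiv_fin_of_encard_eq hT
  refine HasLinkage.congr e ⟨Subtype.val, Subtype.val, fun _ => .nil, fun t => (hTAB t.2).1,
    fun t => (hTAB t.2).2, fun t t' htt' => ?_⟩
  simpa using (Subtype.val_injective.ne htt').symm

theorem separates_bot_inter : (⊥ : SimpleGraph V).Separates A B (A ∩ B) := by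
  rintro a ha b hb ⟨p, hp⟩
  cases p with
  | nil => exact hp a (by simp) ⟨ha, hb⟩
  | cons h _ => exact h

theorem ReachableAvoiding.notMem_left (h : G.ReachableAvoiding X u v) : u ∉ X :=
  let ⟨p, hp⟩ := h
  hp u p.start_mem_support

theorem Walk.exists_walk_of_eq_or_adj {w' : V} (p : G.Walk u v) (q : G.Walk w w')
    (h : v = w ∨ G.Adj v w) :
    ∃ r : G.Walk u w', ∀ z ∈ r.support, z ∈ p.support ∨ z ∈ q.support := by
  rcases h with rfl | h
  · exact ⟨p.append q, fun z => (Walk.mem_support_append_iff p q).1⟩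
  · refine ⟨p.append (q.cons h), fun z hz => ?_⟩
    rcases (Walk.mem_support_append_iff _ _).1 hz with hz | hz
    · exact .inl hz
    · rcases List.mem_cons.1 (Walk.support_cons _ _ ▸ hz) with rfl | hz
      exacts [.inl p.end_mem_support, .inr hz]

/-- Walks ending in `Y` are glued along `Y`, and the walk ending in `x` is glued along `xy` to
the walk starting in `y`. Walks with different ends cannot meet outside `Y`, as `Y` separates
`A` from `B` in `H`. -/
theorem HasLinkageOnto.hasLinkage_glue (hHG : H ≤ G) (hxy : G.Adj x y) (hy : y ∉ Y)
    (hsep : H.Separates A B Y) (hA : H.HasLinkageOnto A (insert x Y))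
    (hB : H.HasLinkageOnto B (insert y Y)) : G.HasLinkage A B ↥(insert x Y) := by
  classical
  obtain ⟨a, P, ha, hPd, hP⟩ := hA
  obtain ⟨b, Q, hb, hQd, hQ⟩ := hB
  have hcross : ∀ t s, ∀ z ∈ (P t).support, z ∈ (Q s).support → z ∈ Y ∧ z = t ∧ z = s := by
    intro t s z hzP hzQ
    by_cases hzY : z ∈ Y
    · exact ⟨hzY, (P t).eq_of_mem_of_dropLast_notMem (hP t) hzP (.inr hzY),
        (Q s).eq_of_mem_of_dropLast_notMem (hQ s) hzQ (.inr hzY)⟩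
    refine absurd ?_ (hsep _ (ha t) _ (hb s))
    refine ((P t).reachableAvoiding_of_dropLast_notMem ?_ z hzP hzY).trans
      ((Q s).reachableAvoiding_of_dropLast_notMem ?_ z hzQ hzY).symm
    exacts [fun z hz hzY => hP t z hz (.inr hzY), fun z hz hzY => hQ s z hz (.inr hzY)]
  let φ : ↥(insert x Y) → ↥(insert y Y) := fun t => ⟨if (t : V) = x then y else t, by
    split_ifs with h
    · exact Set.mem_insert y Y
    · exact .inr (t.2.resolve_left h)⟩
  have hφY : ∀ t, (φ t : V) ∈ Y → (φ t : V) = t := fun t ht => by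
    by_cases h : (t : V) = x
    · simp only [φ, h, if_true] at ht
      exact absurd ht hy
    · simp only [φ, h, if_false]
  have hφ : Function.Injective φ := fun t t' htt' => by
    have htt' := congrArg Subtype.val htt'
    by_cases h : (t : V) = x <;> by_cases h' : (t' : V) = x <;>
      simp only [φ, h, h', if_true, if_false] at htt'
    · exact Subtype.ext (h.trans h'.symm)
    · exact absurd (htt' ▸ t'.2.resolve_left h') hy
    · exact absurd (htt' ▸ t.2.resolve_left h) hy
    · exact Subtype.ext htt'
  choose W hW using fun t => Walk.exists_walk_of_eq_or_adj ((P t).mapLe hHG)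
    ((Q (φ t)).reverse.mapLe hHG) <| by
      by_cases h : (t : V) = x
      · exact .inr (by simpa [φ, h] using hxy)
      · exact .inl (by simp [φ, h])
  simp only [Walk.support_mapLe_eq_support, Walk.support_reverse, List.mem_reverse] at hW
  refine ⟨a, fun t => b (φ t), W, ha, fun t => hb _, fun t t' htt' z hz hz' => ?_⟩
  rcases hW t z hz with hz | hz <;> rcases hW t' z hz' with hz' | hz'
  · exact hPd htt' hz hz'
  · obtain ⟨hzY, rfl, h⟩ := hcross t (φ t') _ hz hz'
    exact htt' (Subtype.ext (h.trans (hφY t' (h ▸ hzY))))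
  · obtain ⟨hzY, rfl, h⟩ := hcross t' (φ t) _ hz' hz
    exact htt' (Subtype.ext (h.trans (hφY t (h ▸ hzY))).symm)
  · exact hQd (hφ.ne htt') hz hz'

theorem ReachableAvoiding.exists_deleteEdges
    (hx : ∃ a ∈ A, (G.deleteEdges {s(x, y)}).ReachableAvoiding Y a x)
    (hy : ∃ a ∈ A, (G.deleteEdges {s(x, y)}).ReachableAvoiding Y a y)
    (hu : ∃ a ∈ A, (G.deleteEdges {s(x, y)}).ReachableAvoiding Y a u)
    (huv : G.ReachableAvoiding Y u v) :
    ∃ a ∈ A, (G.deleteEdges {s(x, y)}).ReachableAvoiding Y a v := by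
  obtain ⟨p, hp⟩ := huv
  induction p with
  | nil => exact hu
  | @cons u w v h p ih =>
    refine ih ?_ fun z hz => hp z (List.mem_cons_of_mem _ hz)
    obtain ⟨a, ha, hau⟩ := hu
    by_cases he : s(u, w) = s(x, y)
    · rcases Sym2.eq_iff.1 he with ⟨-, rfl⟩ | ⟨-, rfl⟩
      exacts [hy, hx]
    · exact ⟨a, ha, hau.concat (deleteEdges_adj.2 ⟨h, he⟩) (hp w (by simp))⟩

theorem Separates.not_reachableAvoiding_deleteEdges_both
    (hsep : (G.deleteEdges {s(x, y)}).Separates A B Y) (ha : a ∈ A) (hb : b ∈ B)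
    (hab : G.ReachableAvoiding Y a b) :
    ¬ ((∃ a ∈ A, (G.deleteEdges {s(x, y)}).ReachableAvoiding Y a x) ∧
      ∃ a ∈ A, (G.deleteEdges {s(x, y)}).ReachableAvoiding Y a y) := by
  rintro ⟨hx, hy⟩
  obtain ⟨a', ha', h⟩ := ReachableAvoiding.exists_deleteEdges hx hy
    ⟨a, ha, .refl hab.notMem_left⟩ hab
  exact hsep a' ha' b hb h

theorem Separates.exists_orientation (hsep : (G.deleteEdges {s(x, y)}).Separates A B Y)
    (ha : a ∈ A) (hb : b ∈ B) (hab : G.ReachableAvoiding Y a b) :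
    ((¬ ∃ a ∈ A, (G.deleteEdges {s(x, y)}).ReachableAvoiding Y a y) ∧
        ¬ ∃ b ∈ B, (G.deleteEdges {s(x, y)}).ReachableAvoiding Y b x) ∨
      ((¬ ∃ a ∈ A, (G.deleteEdges {s(x, y)}).ReachableAvoiding Y a x) ∧
        ¬ ∃ b ∈ B, (G.deleteEdges {s(x, y)}).ReachableAvoiding Y b y) := by
  have hA := hsep.not_reachableAvoiding_deleteEdges_both ha hb hab
  have hB := hsep.symm.not_reachableAvoiding_deleteEdges_both hb ha hab.symm
  have hAB : ∀ z, ¬ ((∃ a ∈ A, (G.deleteEdges {s(x, y)}).ReachableAvoiding Y a z) ∧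
      ∃ b ∈ B, (G.deleteEdges {s(x, y)}).ReachableAvoiding Y b z) :=
    fun z ⟨⟨a, ha, h⟩, ⟨b, hb, h'⟩⟩ => hsep a ha b hb (h.trans h'.symm)
  have := hAB x
  have := hAB y
  tauto

/-- An `A`–`B` walk cut at its first vertex in `Y + x` cannot use `xy`, for then `y` would be
reachable from `A` avoiding `Y` in `G - xy`; so the cut walk lies in `G - xy` and meets `Z`. -/
theorem Separates.of_separates_insert (hxy : x ≠ y) (hyY : y ∉ Y)
    (hG : G.Separates A B (insert x Y))
    (hy : ¬ ∃ a ∈ A, (G.deleteEdges {s(x, y)}).ReachableAvoiding Y a y)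
    (hZ : (G.deleteEdges {s(x, y)}).Separates A (insert x Y) Z) : G.Separates A B Z := by
  rintro a ha b hb ⟨p, hpZ⟩
  obtain ⟨t, ht, q, hqp, hq⟩ := p.exists_walk_dropLast_notMem (X := insert x Y) <| by
    by_contra! h
    exact hG a ha b hb ⟨p, h⟩
  by_cases he : s(x, y) ∈ q.edges
  · refine hy ⟨a, ha, ((q.reachableAvoiding_of_dropLast_notMem hq y ?_ ?_).deleteEdges
      (Set.mem_insert x Y)).mono le_rfl (Set.subset_insert x Y)⟩
    · exact q.snd_mem_support_of_mem_edges he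
    · simp [hxy.symm, hyY]
  · refine hZ a ha t ht ⟨q.toDeleteEdges _ fun e he' hes => he ?_, ?_⟩
    · exact Set.mem_singleton_iff.1 hes ▸ he'
    · simpa using fun z hz => hpZ z (hqp hz)

theorem hasLinkage_of_separates_deleteEdges {k : ℕ} (hxy : G.Adj x y)
    (IH : ∀ A B : Set V, (∀ X, (G.deleteEdges {s(x, y)}).Separates A B X → k ≤ X.encard) →
      (G.deleteEdges {s(x, y)}).HasLinkage A B (Fin k))
    (h : ∀ X, G.Separates A B X → k ≤ X.encard)
    (hY : (G.deleteEdges {s(x, y)}).Separates A B Y) (hYk : Y.encard < k) :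
    G.HasLinkage A B (Fin k) := by
  have hcard : ∀ z, G.Separates A B (insert z Y) → z ∉ Y ∧ (insert z Y).encard = k := by
    intro z hz
    have hk := h _ hz
    have hzY : z ∉ Y := fun hzY => (Set.insert_eq_of_mem hzY ▸ hk).not_gt hYk
    refine ⟨hzY, le_antisymm ?_ hk⟩
    rw [Set.encard_insert_of_notMem hzY]
    exact Order.add_one_le_of_lt hYk
  have hxY := hY.insert_of_deleteEdges
  have hyY : G.Separates A B (insert y Y) := by
    rw [Sym2.eq_swap] at hY
    exact hY.insert_of_deleteEdges
  obtain ⟨hx, hxk⟩ := hcard x hxY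
  obtain ⟨hy, hyk⟩ := hcard y hyY
  obtain ⟨a, ha, b, hb, hab⟩ : ∃ a ∈ A, ∃ b ∈ B, G.ReachableAvoiding Y a b := by
    by_contra! hsep
    exact (h Y hsep).not_gt hYk
  wlog hor : (¬ ∃ a ∈ A, (G.deleteEdges {s(x, y)}).ReachableAvoiding Y a y) ∧
      ¬ ∃ b ∈ B, (G.deleteEdges {s(x, y)}).ReachableAvoiding Y b x generalizing x y
  · have hor' := (hY.exists_orientation ha hb hab).resolve_left hor
    rw [Sym2.eq_swap] at IH hY hor'
    exact this hxy.symm IH hY hyY hxY hy hyk hx hxk hor'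
  obtain ⟨e⟩ := Set.nonempty_equiv_fin_of_encard_eq hxk
  have hA := (IH A _ fun Z hZ => h Z <|
    hxY.of_separates_insert hxy.ne hy hor.1 hZ).hasLinkageOnto hxk
  have hB := (IH _ B fun Z hZ => h Z <| Separates.symm <|
    hyY.symm.of_separates_insert hxy.ne.symm hx (by rw [Sym2.eq_swap]; exact hor.2)
      (by rw [Sym2.eq_swap]; exact hZ.symm)).symm.hasLinkageOnto hyk
  exact (hA.hasLinkage_glue (deleteEdges_le _) hxy hy hY hB).congr e

theorem hasLinkage_of_forall_separates {G : SimpleGraph V} {A B : Set V} {k : ℕ}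
    (hG : G.edgeSet.Finite)
    (h : ∀ X, G.Separates A B X → k ≤ X.encard) : G.HasLinkage A B (Fin k) := by
  obtain hE | ⟨e, he⟩ := G.edgeSet.eq_empty_or_nonempty
  · rw [edgeSet_eq_empty] at hE
    subst hE
    exact hasLinkage_of_le_encard_inter (h _ separates_bot_inter)
  induction e using Sym2.ind with | _ x y => ?_
  have hlt : (G.edgeSet \ {s(x, y)}).ncard < G.edgeSet.ncard :=
    Set.ncard_sdiff_singleton_lt_of_mem he hG
  have IH : ∀ A B : Set V, (∀ X, (G.deleteEdges {s(x, y)}).Separates A B X → k ≤ X.encard) →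
      (G.deleteEdges {s(x, y)}).HasLinkage A B (Fin k) := fun A B =>
    hasLinkage_of_forall_separates (hG.subset (edgeSet_mono (deleteEdges_le _)))
  by_cases hH : ∀ X, (G.deleteEdges {s(x, y)}).Separates A B X → k ≤ X.encard
  · exact (IH A B hH).mono (deleteEdges_le _)
  push Not at hH
  obtain ⟨Y, hY, hYk⟩ := hH
  exact hasLinkage_of_separates_deleteEdges he IH h hY hYk
termination_by G.edgeSet.ncard

theorem hasFan_zero : G.HasFan v S 0 :=
  ⟨Fin.elim0, fun i => i.elim0, fun i => i.elim0, fun i => i.elim0⟩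

theorem HasFan.mono {k : ℕ} (hGH : G ≤ H) (h : G.HasFan v S k) : H.HasFan v S k := by
  obtain ⟨e, p, he, hp⟩ := h
  exact ⟨e, fun i => (p i).mapLe hGH, he, fun i j hij z hzi hzj =>
    hp hij z (by simpa using hzi) (by simpa using hzj)⟩

theorem Separates.of_neighborSet (hv : v ∉ S) (hX : G.Separates (G.neighborSet v) S X) :
    G.Separates {v} S (X \ {v}) := by
  classical
  rintro _ rfl s hs ⟨p, hp⟩
  have hpath := p.bypass_isPath
  have hsub := p.support_bypass_subset_support
  generalize p.bypass = q at hpath hsub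
  cases q with
  | nil => exact hv hs
  | cons hadj q =>
    have hvq := ((Walk.cons_isPath_iff _ _).1 hpath).2
    exact hX _ hadj s hs
      ⟨q, fun z hz hzX => hp z (hsub (by simp [hz])) ⟨hzX, fun h => hvq (h ▸ hz)⟩⟩

theorem hasFan_of_forall_separates_of_finite {k : ℕ} (hG : G.edgeSet.Finite) (hv : v ∉ S)
    (h : ∀ T, v ∉ T → G.Separates {v} S T → k ≤ T.encard) : G.HasFan v S k := by
  obtain ⟨a, e, p, ha, he, hp⟩ := hasLinkage_of_forall_separates (A := G.neighborSet v) (B := S) hG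
    fun X hX => (h _ (fun h => h.2 rfl) (hX.of_neighborSet hv)).trans
      (Set.encard_le_encard Set.sdiff_subset)
  refine ⟨e, fun i => (p i).cons (ha i), he, fun i j hij z hzi hzj => ?_⟩
  obtain rfl | hzi := List.mem_cons.1 hzi
  · rfl
  obtain rfl | hzj := List.mem_cons.1 hzj
  · rfl
  exact (hp hij hzi hzj).elim

section IsFan

variable {m : ℕ} {e : Fin m → V} {p : ∀ i, G.Walk v (e i)} {T : Set V}

theorem IsFan.exists_injective_of_separates (hp : IsFan v S p) (hvT : v ∉ T)
    (hT : G.Separates {v} S T) :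
    ∃ t : Fin m → V, Function.Injective t ∧ ∀ i, t i ∈ T ∧ t i ∈ (p i).support := by
  have : ∀ i, ∃ z ∈ T, z ∈ (p i).support := fun i => by
    by_contra! h
    exact hT v rfl (e i) (hp.1 i) ⟨p i, fun z hz hzT => h z hzT hz⟩
  choose t htT htp using this
  refine ⟨t, fun i j hij => ?_, fun i => ⟨htT i, htp i⟩⟩
  by_contra hne
  exact hvT (hp.2 hne (t i) (htp i) (hij ▸ htp j) ▸ htT i)

theorem IsFan.le_encard_of_separates (hp : IsFan v S p) (hvT : v ∉ T)
    (hT : G.Separates {v} S T) : (m : ℕ∞) ≤ T.encard := by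
  obtain ⟨t, ht, htT⟩ := hp.exists_injective_of_separates hvT hT
  simpa using ht.encard_range.trans
    (Set.encard_le_encard (Set.range_subset_iff.2 fun i => (htT i).1))

/-- A separator of size at most `m` consists of one vertex from each walk of the fan. -/
theorem IsFan.subset_iUnion_support_of_separates (hp : IsFan v S p) (hvT : v ∉ T)
    (hT : G.Separates {v} S T) (hTm : T.encard ≤ m) : T ⊆ ⋃ i, {z | z ∈ (p i).support} := by
  obtain ⟨t, ht, htT⟩ := hp.exists_injective_of_separates hvT hT
  have hrange : Set.range t = T :=
    (Set.finite_range t).eq_of_subset_of_encard_le (Set.range_subset_iff.2 fun i => (htT i).1)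
      (hTm.trans (by simpa using ht.encard_range))
  rw [← hrange]
  rintro _ ⟨i, rfl⟩
  exact Set.mem_iUnion.2 ⟨i, (htT i).2⟩

end IsFan

theorem Walk.mem_sym2_of_mem_edges {p : G.Walk u w} (hp : ∀ z ∈ p.support, z ∈ A) :
    ∀ e ∈ p.edges, e ∈ A.sym2 := by
  intro e he
  induction e using Sym2.ind with
  | _ a b =>
    exact ⟨hp a (p.fst_mem_support_of_mem_edges he), hp b (p.snd_mem_support_of_mem_edges he)⟩

/-- Take a largest fan, of size `m < k`, with vertex set `U`. Each of the finitely many sets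
`T ⊆ U - v` of size at most `m` is avoided by some walk from `v` to `S`. On the finite
subgraph spanned by `U` and these walks there is still no fan of size `m + 1`, so the finite
case yields a separator of size at most `m` there; it meets every walk of the fan, hence lies in
`U`, and is avoided by one of the chosen walks. -/
theorem hasFan_of_forall_separates {k : ℕ} (hv : v ∉ S)
    (h : ∀ T, v ∉ T → G.Separates {v} S T → k ≤ T.encard) : G.HasFan v S k := by
  classical
  set m := Nat.findGreatest (G.HasFan v S) k
  have hm : G.HasFan v S m := Nat.findGreatest_spec k.zero_le hasFan_zero
  obtain hmk | hmk := (Nat.findGreatest_le k : m ≤ k).lt_or_eq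
  swap
  · exact hmk ▸ hm
  have hnext : ¬ G.HasFan v S (m + 1) := Nat.findGreatest_is_greatest (Nat.lt_succ_self m) hmk
  obtain ⟨e, p, hp⟩ := hm
  set U := ⋃ i, {z | z ∈ (p i).support}
  have hU : U.Finite := Set.finite_iUnion fun i => (p i).support.finite_toSet
  set 𝒞 := {T : Set V | T ⊆ U ∧ v ∉ T ∧ T.encard ≤ m}
  suffices ∃ T ∈ 𝒞, G.Separates {v} S T by
    obtain ⟨T, ⟨-, hvT, hTm⟩, hT⟩ := this
    exact absurd ((h T hvT hT).trans hTm) (by exact_mod_cast hmk.not_ge)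
  by_contra! h𝒞
  choose s hs q hq using fun T : 𝒞 => by simpa [Separates] using h𝒞 T T.2
  have : Finite 𝒞 := (hU.finite_subsets.subset fun T hT => hT.1).to_subtype
  set A := U ∪ ⋃ T : 𝒞, {z | z ∈ (q T).support}
  have hA : A.Finite := hU.union (Set.finite_iUnion fun T => (q T).support.finite_toSet)
  have hUA : U ⊆ A := Set.subset_union_left
  have hGA : (G.deleteEdges A.sym2ᶜ).edgeSet.Finite := by
    refine (Set.sym2_eq_mk_image ▸ (hA.prod hA).image _).subset ?_
    rw [edgeSet_deleteEdges, Set.sdiff_compl]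
    exact Set.inter_subset_right
  obtain ⟨T, hvT, hT, hTm⟩ : ∃ T, v ∉ T ∧ (G.deleteEdges A.sym2ᶜ).Separates {v} S T ∧
      T.encard < m + 1 := by
    by_contra! hT
    exact hnext <| (hasFan_of_forall_separates_of_finite hGA hv fun T hvT hT' => by
      exact_mod_cast hT T hvT hT').mono (deleteEdges_le _)
  have hTm : T.encard ≤ m := Order.le_of_lt_add_one hTm
  have hTU : T ⊆ U := by
    have hpA : IsFan v S fun i => (p i).toDeleteEdges A.sym2ᶜ fun e he hA' =>
        hA' ((p i).mem_sym2_of_mem_edges (fun z hz => hUA (Set.mem_iUnion.2 ⟨i, hz⟩)) e he) :=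
      ⟨hp.1, fun i j hij z hzi hzj => hp.2 hij z (by simpa using hzi) (by simpa using hzj)⟩
    simpa using hpA.subset_iUnion_support_of_separates hvT hT hTm
  let T' : 𝒞 := ⟨T, hTU, hvT, hTm⟩
  have hqA : ∀ z ∈ (q T').support, z ∈ A := fun z hz =>
    Or.inr (Set.mem_iUnion.2 ⟨T', hz⟩)
  exact hT v rfl (s T') (hs T') ⟨(q T').toDeleteEdges _ fun e he hA' =>
    hA' ((q T').mem_sym2_of_mem_edges hqA e he), by simpa using hq T'⟩

theorem reachableAvoiding_iff_reachable_induce :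
    G.ReachableAvoiding X u v ↔
      ∃ (hu : u ∉ X) (hv : v ∉ X), (G.induce Xᶜ).Reachable ⟨u, hu⟩ ⟨v, hv⟩ := by
  constructor
  · rintro ⟨p, hp⟩
    exact ⟨hp u p.start_mem_support, hp v p.end_mem_support, ⟨p.induce Xᶜ hp⟩⟩
  · rintro ⟨hu, hv, ⟨q⟩⟩
    refine ⟨q.map (Embedding.induce Xᶜ).toHom, fun z hz => ?_⟩
    obtain ⟨z', -, rfl⟩ := List.mem_map.1 ((Walk.support_map _ _) ▸ hz)
    exact z'.2

end SimpleGraph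

theorem ksConnected_iff_reachableAvoiding {V : Type*} {G : SimpleGraph V} {k : ℕ} {S : Set V} :
    KSConnected G k S ↔
      ∀ T : Set V, T.encard < k → ∀ v ∉ T, ∃ s ∈ S, G.ReachableAvoiding T v s := by
  refine forall_congr' fun T => imp_congr_right fun _ => forall_congr' fun v => ?_
  simp only [reachableAvoiding_iff_reachable_induce]
  constructor
  · rintro h hv
    obtain ⟨s, hs, hsS, hr⟩ := h hv
    exact ⟨s, hsS, hv, hs, hr⟩
  · rintro h hv
    obtain ⟨s, hsS, _, hs, hr⟩ := h hv
    exact ⟨s, hs, hsS, hr⟩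

theorem statement2_general {V : Type*} (G : SimpleGraph V) (k : ℕ)
    (S : Set V) :
    KSConnected G k S ↔
      ∀ v : V, v ∉ S →
        ∃ (e : Fin k → V) (p : ∀ i, G.Path v (e i)),
          (∀ i, e i ∈ S) ∧
          ∀ i j, i ≠ j → ∀ x, x ∈ ((p i : G.Walk v (e i)).support) →
            x ∈ ((p j : G.Walk v (e j)).support) → x = v := by
  classical
  rw [ksConnected_iff_reachableAvoiding]
  constructor
  · intro h v hv
    obtain ⟨e, p, he, hp⟩ := hasFan_of_forall_separates hv fun T hvT hT => by
      by_contra! hTk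
      obtain ⟨s, hs, hvs⟩ := h T hTk v hvT
      exact hT v rfl s hs hvs
    exact ⟨e, fun i => (p i).toPath, he, fun i j hij z hzi hzj =>
      hp hij z ((p i).support_toPath_subset_support hzi) ((p j).support_toPath_subset_support hzj)⟩
  · intro h T hTk v hvT
    by_cases hv : v ∈ S
    · exact ⟨v, hv, .refl hvT⟩
    by_contra! hT
    obtain ⟨e, p, he, hp⟩ := h v hv
    have hfan : IsFan v S fun i => (p i : G.Walk v (e i)) := ⟨he, fun i j hij => hp i j hij⟩
    exact (hfan.le_encard_of_separates hvT fun _ h s hs => h ▸ hT s hs).not_gt hTk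

theorem statement2 {V : Type*} (G : SimpleGraph V) (k : ℕ) (hk : 0 < k)
    (S : Set V) (hS : S.Nonempty) :
    KSConnected G k S ↔
      ∀ v : V, v ∉ S →
        ∃ (e : Fin k → V) (p : ∀ i, G.Path v (e i)),
          (∀ i, e i ∈ S) ∧
          ∀ i j, i ≠ j → ∀ x, x ∈ ((p i : G.Walk v (e i)).support) →
            x ∈ ((p j : G.Walk v (e j)).support) → x = v :=
  statement2_general G k S
end

section
/- Let G and G' be (possibly infinite) simple graphs on the same vertex set, let k be a positive integer, and let S be a nonempty subset of the common vertex set. Suppose that every edge belonging to exactly one of G and G' has both of its endpoints in S (i.e., G' is obtained from G by adding and/or deleting edges with both ends in S). Then G is (k,S)-connected if and only if G' is (k,S)-connected. -/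
open SimpleGraph

/-- Stopping a walk at its first vertex in `S` only uses edges leaving vertices outside `S`. -/
theorem SimpleGraph.Reachable.exists_reachable_mem_of_adj_of_notMem {W : Type*}
    {H H' : SimpleGraph W} {S : Set W} (hadj : ∀ a b, H.Adj a b → a ∉ S → H'.Adj a b)
    {v s : W} (hvs : H.Reachable v s) (hs : s ∈ S) : ∃ s' ∈ S, H'.Reachable v s' := by
  obtain ⟨w⟩ := hvs
  induction w with
  | nil => exact ⟨_, hs, .rfl⟩
  | @cons a b _ hab _ ih =>
    by_cases ha : a ∈ S
    · exact ⟨a, ha, .rfl⟩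
    · obtain ⟨s', hs', hbs'⟩ := ih hs
      exact ⟨s', hs', (hadj a b hab ha).reachable.trans hbs'⟩

theorem KSConnected.of_adj_of_notMem {V : Type*} {G G' : SimpleGraph V} {k : ℕ} {S : Set V}
    (hadj : ∀ u v, G.Adj u v → u ∉ S → G'.Adj u v) (h : KSConnected G k S) :
    KSConnected G' k S := by
  intro T hT v hv
  obtain ⟨s, hs, hsS, hvs⟩ := h T hT v hv
  obtain ⟨s', hs'S, hvs'⟩ := hvs.exists_reachable_mem_of_adj_of_notMem
    (H' := G'.induce Tᶜ) (S := {x | (x : V) ∈ S}) (fun a b hab ha => hadj a b hab ha) hsS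
  exact ⟨s', s'.2, hs'S, hvs'⟩

theorem statement4_general {V : Type*} (G G' : SimpleGraph V) (k : ℕ)
    (S : Set V)
    (hdiff : ∀ u v : V, ¬ (G.Adj u v ↔ G'.Adj u v) → u ∈ S ∧ v ∈ S) :
    KSConnected G k S ↔ KSConnected G' k S := by
  have hagree : ∀ u v, u ∉ S → (G.Adj u v ↔ G'.Adj u v) := fun u v hu =>
    not_not.mp fun h => hu (hdiff u v h).1
  exact ⟨.of_adj_of_notMem fun u v huv hu => (hagree u v hu).mp huv,
    .of_adj_of_notMem fun u v huv hu => (hagree u v hu).mpr huv⟩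

theorem statement4 {V : Type*} (G G' : SimpleGraph V) (k : ℕ) (hk : 0 < k)
    (S : Set V) (hS : S.Nonempty)
    (hdiff : ∀ u v : V, ¬ (G.Adj u v ↔ G'.Adj u v) → u ∈ S ∧ v ∈ S) :
    KSConnected G k S ↔ KSConnected G' k S :=
  statement4_general G G' k S hdiff
end

section
/- Let G be a (possibly infinite) simple graph, k a positive integer, and S a nonempty subset of V(G) such that G is (k,S)-connected. Let H be a nonempty subgraph of G, and let S_H = A_G(H) ∪ (S ∩ V(H)), where A_G(H) is the set of vertices of H incident in G with an edge of E(G) − E(H). Then S_H is nonempty and H is (k,S_H)-connected. -/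
open SimpleGraph

/-- The set of attachments `A_G(H)` of a subgraph `H` of `G`: vertices of `H` incident
(in `G`) with an edge of `E(G) - E(H)`. -/
def attachmentSet {V : Type*} (G : SimpleGraph V) (H : G.Subgraph) : Set V :=
  {v | v ∈ H.verts ∧ ∃ u : V, G.Adj v u ∧ ¬ H.Adj v u}

section

variable {V : Type*} {G : SimpleGraph V} {k : ℕ} {S : Set V}

lemma KSConnected.nonempty [Nonempty V] (hG : KSConnected G k S) (hk : 0 < k) : S.Nonempty := by
  obtain ⟨v⟩ := ‹Nonempty V›
  obtain ⟨s, -, hs, -⟩ := hG ∅ (by simpa using hk) v (Set.notMem_empty v)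
  exact ⟨s, hs⟩

/-- Follow the walk along edges of `H` for as long as possible: either it ends in `S ∩ V(H)`,
or its first edge outside `H` leaves from an attachment vertex. -/
lemma SimpleGraph.Subgraph.exists_reachable_attachmentSet_of_walk (H : G.Subgraph)
    (T : Set H.verts) {x y : ↥(Subtype.val '' T)ᶜ} (W : (G.induce (Subtype.val '' T)ᶜ).Walk x y)
    (hx : x.1 ∈ H.verts) (hy : y.1 ∈ S) :
    ∃ s : H.verts, ∃ hs : s ∉ T, s.1 ∈ attachmentSet G H ∪ (S ∩ H.verts) ∧
      (H.coe.induce Tᶜ).Reachable ⟨⟨x, hx⟩, fun h => x.2 ⟨_, h, rfl⟩⟩ ⟨s, hs⟩ := by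
  induction W with
  | nil => exact ⟨⟨_, hx⟩, _, Or.inr ⟨hy, hx⟩, .rfl⟩
  | @cons a b _ hab _ ih =>
    by_cases hH : H.Adj a b
    · obtain ⟨s, hs, hsS, hreach⟩ := ih hH.snd_mem hy
      exact ⟨s, hs, hsS, (show (H.coe.induce Tᶜ).Adj ⟨⟨a, hx⟩, fun h => a.2 ⟨_, h, rfl⟩⟩
        ⟨⟨b, hH.snd_mem⟩, fun h => b.2 ⟨_, h, rfl⟩⟩ from hH).reachable.trans hreach⟩
    · exact ⟨⟨_, hx⟩, _, Or.inl ⟨hx, b, hab, hH⟩, .rfl⟩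

lemma KSConnected.subgraph_coe (hG : KSConnected G k S) (H : G.Subgraph) :
    KSConnected H.coe k (Subtype.val ⁻¹' (attachmentSet G H ∪ (S ∩ H.verts))) := by
  intro T hT v hv
  have hvT : v.1 ∉ Subtype.val '' T := Subtype.val_injective.mem_set_image.not.mpr hv
  obtain ⟨s, hsT, hsS, ⟨W⟩⟩ :=
    hG _ (Subtype.val_injective.encard_image T ▸ hT) v hvT
  exact H.exists_reachable_attachmentSet_of_walk T W v.2 hsS

end

theorem statement7_general {V : Type*} (G : SimpleGraph V) (k : ℕ) (hk : 0 < k)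
    (S : Set V) (hG : KSConnected G k S)
    (H : G.Subgraph) (hH : H.verts.Nonempty) :
    (attachmentSet G H ∪ (S ∩ H.verts)).Nonempty ∧
      KSConnected H.coe k (Subtype.val ⁻¹' (attachmentSet G H ∪ (S ∩ H.verts))) := by
  have hHk := hG.subgraph_coe H
  have : Nonempty H.verts := hH.to_subtype
  obtain ⟨s, hs⟩ := hHk.nonempty hk
  exact ⟨⟨s, hs⟩, hHk⟩

theorem statement7 {V : Type*} (G : SimpleGraph V) (k : ℕ) (hk : 0 < k)
    (S : Set V) (hS : S.Nonempty) (hG : KSConnected G k S)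
    (H : G.Subgraph) (hH : H.verts.Nonempty) :
    (attachmentSet G H ∪ (S ∩ H.verts)).Nonempty ∧
      KSConnected H.coe k (Subtype.val ⁻¹' (attachmentSet G H ∪ (S ∩ H.verts))) :=
  statement7_general G k hk S hG H hH
end

section
/- Let G be a (possibly infinite) simple graph, k a positive integer, and S a nonempty subset of V(G) such that G is (k,S)-connected. Let H be a subgraph of G with S ⊆ V(H), and let k' be an integer with 0 ≤ k' ≤ k. If H is k'-connected, then G is k'-connected. -/
/-! Let `T` be a set of fewer than `k'` vertices. Every vertex of `G - T` reaches a vertex of `S`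
outside `T`, since `G` is `(k, S)`-connected and `k' ≤ k`. Any two such vertices of `S` lie in
`H - T`, which is connected because `H` is `k'`-connected, and `H - T` is a subgraph of `G - T`.
So `G - T` is connected. -/

open SimpleGraph

/-- `T` is a cutset of `G`: `G - T` is disconnected. -/
def IsCutset {V : Type*} (G : SimpleGraph V) (T : Set V) : Prop :=
  ∃ u v : V, ∃ hu : u ∉ T, ∃ hv : v ∉ T,
    ¬ (G.induce (Tᶜ : Set V)).Reachable ⟨u, hu⟩ ⟨v, hv⟩

/-- `G` is `k`-connected: it has at least `k + 1` vertices and no cutset of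
fewer than `k` vertices. -/
def KConnected {V : Type*} (G : SimpleGraph V) (k : ℕ) : Prop :=
  (k : ℕ∞) + 1 ≤ (Set.univ : Set V).encard ∧
    ∀ T : Set V, T.encard < (k : ℕ∞) → ¬ IsCutset G T

namespace SimpleGraph.Subgraph

variable {V : Type*} {G : SimpleGraph V}

theorem encard_univ_verts_le (H : G.Subgraph) :
    (Set.univ : Set H.verts).encard ≤ (Set.univ : Set V).encard := by
  rw [Set.encard_univ, ENat.card_coe_set_eq]
  exact Set.encard_mono (Set.subset_univ _)

/-- `H - T` as a subgraph of `G - T`. -/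
def induceComplPreimageHom (H : G.Subgraph) (T : Set V) :
    H.coe.induce (Subtype.val ⁻¹' T : Set H.verts)ᶜ →g G.induce Tᶜ where
  toFun x := ⟨x.1.1, x.2⟩
  map_rel' hab := H.adj_sub hab

end SimpleGraph.Subgraph

section

variable {V : Type*} {G : SimpleGraph V}

theorem KSConnected.mono {k k' : ℕ} {S : Set V} (hG : KSConnected G k S) (hk : k' ≤ k) :
    KSConnected G k' S :=
  fun T hT => hG T (hT.trans_le (by exact_mod_cast hk))

theorem KSConnected.not_isCutset {k : ℕ} {S : Set V} (hG : KSConnected G k S) {T : Set V}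
    (hT : T.encard < k)
    (hS : ∀ s ∈ S, ∀ s' ∈ S, ∀ (hs : s ∉ T) (hs' : s' ∉ T),
      (G.induce Tᶜ).Reachable ⟨s, hs⟩ ⟨s', hs'⟩) :
    ¬ IsCutset G T := by
  rintro ⟨u, v, hu, hv, huv⟩
  obtain ⟨s, hsT, hsS, hus⟩ := hG T hT u hu
  obtain ⟨s', hs'T, hs'S, hvs'⟩ := hG T hT v hv
  exact huv ((hus.trans (hS s hsS s' hs'S hsT hs'T)).trans hvs'.symm)

theorem KConnected.reachable_induce_compl {H : G.Subgraph} {k : ℕ} (hH : KConnected H.coe k)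
    {T : Set V} (hT : T.encard < k) {u v : V} (hu : u ∈ H.verts) (hv : v ∈ H.verts)
    (huT : u ∉ T) (hvT : v ∉ T) :
    (G.induce Tᶜ).Reachable ⟨u, huT⟩ ⟨v, hvT⟩ := by
  have hT' : (Subtype.val ⁻¹' T : Set H.verts).encard < k :=
    (Set.encard_preimage_val_le_encard_right _ _).trans_lt hT
  have hreach : (H.coe.induce (Subtype.val ⁻¹' T : Set H.verts)ᶜ).Reachable
      ⟨⟨u, hu⟩, huT⟩ ⟨⟨v, hv⟩, hvT⟩ := by
    by_contra h
    exact hH.2 _ hT' ⟨_, _, huT, hvT, h⟩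
  exact hreach.map (H.induceComplPreimageHom T)

end

theorem statement8_general {V : Type*} (G : SimpleGraph V) (k : ℕ)
    (S : Set V) (hG : KSConnected G k S)
    (H : G.Subgraph) (hSH : S ⊆ H.verts)
    (k' : ℕ) (hk' : k' ≤ k) (hH : KConnected H.coe k') :
    KConnected G k' :=
  ⟨hH.1.trans H.encard_univ_verts_le, fun _ hT =>
    (hG.mono hk').not_isCutset hT fun _ hs _ hs' hsT hs'T =>
      hH.reachable_induce_compl hT (hSH hs) (hSH hs') hsT hs'T⟩

theorem statement8 {V : Type*} (G : SimpleGraph V) (k : ℕ) (hk : 0 < k)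
    (S : Set V) (hS : S.Nonempty) (hG : KSConnected G k S)
    (H : G.Subgraph) (hSH : S ⊆ H.verts)
    (k' : ℕ) (hk' : k' ≤ k) (hH : KConnected H.coe k') :
    KConnected G k' :=
  statement8_general G k S hG H hSH k' hk' hH
end

section
/- Let G be a (possibly infinite) simple graph, k a positive integer, and S a nonempty subset of V(G) such that G is (k,S)-connected. Let H be a subgraph of G with S ⊆ V(H) such that H is isomorphic to the complete graph K_k (i.e., H has exactly k vertices and all (k choose 2) edges between them) and V(H) ≠ V(G). Then G is k-connected. -/
open SimpleGraph

theorem Set.encard_add_one_le_encard_univ {V : Type*} {s : Set V} (hs : s ≠ Set.univ) :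
    s.encard + 1 ≤ (Set.univ : Set V).encard := by
  obtain ⟨x, hx⟩ := (Set.ne_univ_iff_exists_notMem s).mp hs
  calc s.encard + 1 = (insert x s).encard := (Set.encard_insert_of_notMem hx).symm
    _ ≤ (Set.univ : Set V).encard := Set.encard_mono (Set.subset_univ _)

theorem SimpleGraph.IsClique.reachable_induce_compl {V : Type*} {G : SimpleGraph V}
    {C T : Set V} (hC : G.IsClique C) {a b : V} (ha : a ∈ C) (hb : b ∈ C)
    (haT : a ∉ T) (hbT : b ∉ T) :
    (G.induce (Tᶜ : Set V)).Reachable ⟨a, haT⟩ ⟨b, hbT⟩ := by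
  rcases eq_or_ne a b with rfl | hab
  · rfl
  · exact Adj.reachable (hC ha hb hab)

/-- Every vertex of `G - T` reaches `S`, and `S` lies in a clique, so `G - T` is connected. -/
theorem KSConnected.not_isCutset_of_subset_isClique {V : Type*} {G : SimpleGraph V} {k : ℕ}
    {S C T : Set V} (hG : KSConnected G k S) (hC : G.IsClique C) (hSC : S ⊆ C)
    (hT : T.encard < (k : ℕ∞)) : ¬ IsCutset G T := by
  rintro ⟨u, v, hu, hv, hunreach⟩
  obtain ⟨s, hs, hsS, hus⟩ := hG T hT u hu
  obtain ⟨s', hs', hs'S, hvs'⟩ := hG T hT v hv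
  exact hunreach <|
    (hus.trans (hC.reachable_induce_compl (hSC hsS) (hSC hs'S) hs hs')).trans hvs'.symm

theorem statement9_general {V : Type*} (G : SimpleGraph V) (k : ℕ)
    (S : Set V) (hG : KSConnected G k S)
    (H : G.Subgraph) (hSH : S ⊆ H.verts)
    (hcard : H.verts.encard = (k : ℕ∞))
    (hcomplete : ∀ u ∈ H.verts, ∀ v ∈ H.verts, u ≠ v → H.Adj u v)
    (hproper : H.verts ≠ Set.univ) :
    KConnected G k := by
  have hclique : G.IsClique H.verts := fun u hu v hv huv => H.adj_sub (hcomplete u hu v hv huv)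
  refine ⟨?_, fun T hT => hG.not_isCutset_of_subset_isClique hclique hSH hT⟩
  simpa only [hcard] using Set.encard_add_one_le_encard_univ hproper

theorem statement9 {V : Type*} (G : SimpleGraph V) (k : ℕ) (hk : 0 < k)
    (S : Set V) (hS : S.Nonempty) (hG : KSConnected G k S)
    (H : G.Subgraph) (hSH : S ⊆ H.verts)
    (hcard : H.verts.encard = (k : ℕ∞))
    (hcomplete : ∀ u ∈ H.verts, ∀ v ∈ H.verts, u ≠ v → H.Adj u v)
    (hproper : H.verts ≠ Set.univ) :
    KConnected G k :=
  statement9_general G k S hG H hSH hcard hcomplete hproper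
end

section
/- Let G be a (possibly infinite) simple graph, k a positive integer, and S a nonempty subset of V(G). Let G' be a graph obtained from G by adding a set R of new vertices (disjoint from V(G)) together with some new edges, such that every new edge is incident with at least one vertex of R and every vertex of R is adjacent in G' only to vertices of R ∪ S. Then G is (k,S)-connected if and only if G' is (k, R ∪ S)-connected. -/
/-!
Identify `G` with its image in `G'`. A deletion set `T` of `G'` meets `V(G)` in a set no larger
than `T`, and a path of `G - (T ∩ V(G))` to `S` is a path of `G' - T`; every new vertex lies in
`R ∪ S` by itself. Conversely, delete `T ⊆ V(G)` from `G'` and let `C` be the component of `v` in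
`G - T`. If `C` missed `S`, no new vertex could be adjacent to `C`, so `C` would also be a whole
component of `G' - T`, and it contains neither a new vertex nor a vertex of `S`.
-/

open SimpleGraph

open Set

namespace SimpleGraph

lemma Reachable.mem_of_adj_closed {V : Type*} {G : SimpleGraph V} {P : Set V}
    (hP : ∀ ⦃x y⦄, G.Adj x y → x ∈ P → y ∈ P) {u v : V} (huv : G.Reachable u v)
    (hu : u ∈ P) : v ∈ P := by
  rw [reachable_iff_reflTransGen] at huv
  induction huv with
  | refl => exact hu
  | tail _ hxy ih => exact hP hxy ih

end SimpleGraph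

section

variable {V W : Type*} {G : SimpleGraph V} {G' : SimpleGraph W} {k : ℕ} {S : Set V}

theorem KSConnected.map (f : G ↪g G') (h : KSConnected G k S) :
    KSConnected G' k (f '' S ∪ (range f)ᶜ) := by
  intro T hT w hw
  obtain hwf | ⟨u, rfl⟩ := em' (w ∈ range f)
  · exact ⟨w, hw, Or.inr hwf, Reachable.refl _⟩
  have hcard : (f ⁻¹' T).encard < k :=
    (encard_le_encard_of_injOn (mapsTo_preimage f T) f.injective.injOn).trans_lt hT
  obtain ⟨s, hs, hsS, hreach⟩ := h (f ⁻¹' T) hcard u hw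
  exact ⟨f s, hs, Or.inl (mem_image_of_mem f hsS),
    hreach.map (induceHom (t := Tᶜ) f.toHom fun _ hx ↦ hx)⟩

theorem KSConnected.of_map (f : G ↪g G')
    (hnew : ∀ v w, G'.Adj (f v) w → w ∉ range f → v ∈ S)
    (h : KSConnected G' k (f '' S ∪ (range f)ᶜ)) : KSConnected G k S := by
  intro T hT v hv
  have hv' : f v ∉ f '' T := f.injective.mem_set_image.not.2 hv
  obtain ⟨w, hw, hwS, hreach⟩ :=
    h (f '' T) (by rwa [f.injective.encard_image]) (f v) hv'
  by_contra! hmiss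
  let C : Set ↥(f '' T)ᶜ :=
    {x | ∃ b, ∃ hb : b ∉ T, x.val = f b ∧ (G.induce Tᶜ).Reachable ⟨v, hv⟩ ⟨b, hb⟩}
  have hC : ∀ ⦃x y⦄, (G'.induce (f '' T)ᶜ).Adj x y → x ∈ C → y ∈ C := by
    rintro ⟨x, hx⟩ ⟨y, hy⟩ hxy ⟨b, hb, rfl, hvb⟩
    by_cases hyf : y ∈ range f
    · obtain ⟨c, rfl⟩ := hyf
      have hc : c ∉ T := fun hcT ↦ hy (mem_image_of_mem f hcT)
      have hbc : (G.induce Tᶜ).Adj ⟨b, hb⟩ ⟨c, hc⟩ := f.map_adj_iff.1 hxy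
      exact ⟨c, hc, rfl, hvb.trans hbc.reachable⟩
    · exact absurd hvb (hmiss b hb (hnew b y hxy hyf))
  obtain ⟨b, hb, rfl : w = f b, hvb⟩ :=
    hreach.mem_of_adj_closed hC ⟨v, hv, rfl, Reachable.refl _⟩
  have hbS : b ∈ S := by simpa [f.injective.mem_set_image] using hwS
  exact hmiss b hb hbS hvb

theorem KSConnected.iff_map (f : G ↪g G')
    (hnew : ∀ v w, G'.Adj (f v) w → w ∉ range f → v ∈ S) :
    KSConnected G k S ↔ KSConnected G' k (f '' S ∪ (range f)ᶜ) :=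
  ⟨KSConnected.map f, KSConnected.of_map f hnew⟩

end

theorem statement10_general {V R : Type*} (G : SimpleGraph V) (k : ℕ)
    (S : Set V)
    (G' : SimpleGraph (V ⊕ R))
    (hrestrict : ∀ u v : V, G'.Adj (Sum.inl u) (Sum.inl v) ↔ G.Adj u v)
    (hnew : ∀ (r : R) (v : V), G'.Adj (Sum.inr r) (Sum.inl v) → v ∈ S) :
    KSConnected G k S ↔
      KSConnected G' k (Sum.inl '' S ∪ Set.range Sum.inr) := by
  let f : G ↪g G' := ⟨⟨Sum.inl, Sum.inl_injective⟩, hrestrict _ _⟩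
  have hnew' : ∀ v w, G'.Adj (f v) w → w ∉ range f → v ∈ S := by
    rintro v (u | r) hvw hw
    · exact absurd ⟨u, rfl⟩ hw
    · exact hnew r v hvw.symm
  rw [← compl_range_inl]
  exact KSConnected.iff_map f hnew'

/-- `G'` (on vertex set `V ⊕ R`) is obtained from `G` (on vertex set `V`, embedded via
`Sum.inl`) by adding the set `R` of new vertices (embedded via `Sum.inr`), each adjacent
only to vertices of `R ∪ S`: the restriction of `G'` to the old vertices is exactly `G`,
and every edge of `G'` at a new vertex goes to another new vertex or into `S`. -/
theorem statement10 {V R : Type*} (G : SimpleGraph V) (k : ℕ) (hk : 0 < k)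
    (S : Set V) (hS : S.Nonempty)
    (G' : SimpleGraph (V ⊕ R))
    (hrestrict : ∀ u v : V, G'.Adj (Sum.inl u) (Sum.inl v) ↔ G.Adj u v)
    (hnew : ∀ (r : R) (v : V), G'.Adj (Sum.inr r) (Sum.inl v) → v ∈ S) :
    KSConnected G k S ↔
      KSConnected G' k (Sum.inl '' S ∪ Set.range Sum.inr) :=
  statement10_general G k S G' hrestrict hnew
end
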